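/- Let z ∈ Ĥ and let (f₀, z₀), (f₁, z₁), … be the continued fraction data of z, defined by z₀ = z, f_i the unique Puiseux polynomial with ν(z_i - f_i) > 0, and z_{i+1} = 1/(z_i - f_i) whenever z_i ≠ f_i. Let σ_i(x) = 1/(x - f_i) and ρ_n = σ_n ∘ ⋯ ∘ σ_0. If z_{n+1} is defined, then ν(ρ_n(z)/ρ_n'(z)) = deg(f_{n+1}) + 2·Σ_{i=1}^{n} deg(f_i). -/

import Mathlib

/-!
Along the continued fraction, `ρ_k(z) = z_{k+1}`, and the chain rule makes `ρ_n'(z)` the product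
of the factors `-z_{k+1}²`, so `ν (ρ_n(z) / ρ_n'(z)) = -ν z_{n+1} - 2 Σ_{k=1}^{n} ν z_k`.
Each `z_k` with `k ≥ 1` has negative valuation and lies at positive valuation from `f_k`, so the
ultrametric inequality gives `ν z_k = ν f_k = -deg f_k`.
-/

universe u

/-- Evaluation of a finite continued fraction `[f₀, f₁, …, f_N]` in a field,
`cfEval [a] = a`, `cfEval (a :: l) = a + (cfEval l)⁻¹` (with the convention `0⁻¹ = 0`). -/
def cfEval {L : Type u} [Field L] : List L → L
  | [] => 0
  | a :: l => a + (cfEval l)⁻¹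

/-- The Moebius maps `ρ_n = σ_n ∘ ⋯ ∘ σ_0`, where `σ_i x = (x - f_i)⁻¹`. -/
def rho {L : Type u} [Field L] (f : ℕ → L) : ℕ → L → L
  | 0, x => (x - f 0)⁻¹
  | n + 1, x => (rho f n x - f (n + 1))⁻¹

/-- The derivative `ρ_n'` of `ρ_n`, computed by the chain rule from
`σ_i'(x) = -((x - f_i)⁻¹)²`. -/
def rho' {L : Type u} [Field L] (f : ℕ → L) : ℕ → L → L
  | 0, x => -((x - f 0)⁻¹) ^ 2
  | n + 1, x => -((rho f n x - f (n + 1))⁻¹) ^ 2 * rho' f n x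

/-- An abstract presentation of the completion `K̂` of the Puiseux field
`E⟨⟨t⁻¹⟩⟩` over a field `E`.  The field `K` carries an additive valuation
`ν` with values in `ℚ` on nonzero elements (normalized by `ν (t^r) = -r`,
where `mono r` plays the role of the monomial `t^r`), the subfield `E` is
embedded via `emb`, the simple "Laurent Puiseux polynomials" (the ring
generated by `E` and all rational powers of `t`) are dense, and `K` is
complete for `ν`. -/
structure PuiseuxCompletion (E : Type u) [Field E] where
  K : Type u
  [fieldK : Field K]
  ν : K → ℚ
  emb : E →+* K
  mono : ℚ → K
  mono_zero : mono 0 = 1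
  mono_mul : ∀ r s : ℚ, mono r * mono s = mono (r + s)
  ν_mono : ∀ r : ℚ, ν (mono r) = -r
  ν_emb : ∀ e : E, e ≠ 0 → ν (emb e) = 0
  ν_mul : ∀ x y : K, x ≠ 0 → y ≠ 0 → ν (x * y) = ν x + ν y
  ν_add : ∀ x y : K, x ≠ 0 → y ≠ 0 → x + y ≠ 0 → min (ν x) (ν y) ≤ ν (x + y)
  dense' : ∀ z : K, ∀ C : ℚ,
    ∃ f ∈ Subring.closure (Set.range emb ∪ Set.range mono), z = f ∨ C < ν (z - f)
  complete' : ∀ uSeq : ℕ → K,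
    (∀ C : ℚ, ∃ N : ℕ, ∀ m ≥ N, ∀ n ≥ N, uSeq m = uSeq n ∨ C < ν (uSeq m - uSeq n)) →
    ∃ z : K, ∀ C : ℚ, ∃ N : ℕ, ∀ n ≥ N, uSeq n = z ∨ C < ν (uSeq n - z)

attribute [instance] PuiseuxCompletion.fieldK

namespace PuiseuxCompletion

variable {E : Type u} [Field E] (P : PuiseuxCompletion E)

/-- The ring `Ā = E⟨t⟩` of Puiseux polynomials: finite `E`-linear combinations of
nonnegative rational powers of `t`. -/
def Abar : Subring P.K :=
  Subring.closure (Set.range P.emb ∪ P.mono '' {r : ℚ | 0 ≤ r})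

/-- `deg f = -ν f`. -/
def deg (f : P.K) : ℚ := -P.ν f

/-- The rational Puiseux field `k̃ = Quot(Ā) = ⋃ₙ E(t^{1/n})`, as a subfield of `K̂`. -/
def ktilde : Subfield P.K := Subfield.closure (P.Abar : Set P.K)

/-- `uSeq n → z` with respect to the valuation `ν`. -/
def TendsTo (uSeq : ℕ → P.K) (z : P.K) : Prop :=
  ∀ C : ℚ, ∃ N : ℕ, ∀ n ≥ N, uSeq n = z ∨ C < P.ν (uSeq n - z)

/-- One step of the continued fraction algorithm succeeds at index `i`:
`f i` is the Puiseux polynomial with `ν (z_i - f i) > 0`, the fraction does not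
end at `i` (`z_i ≠ f i`), and `z_{i+1} = (z_i - f i)⁻¹`. -/
def CFStep (f zs : ℕ → P.K) (i : ℕ) : Prop :=
  f i ∈ P.Abar ∧ 0 < P.ν (zs i - f i) ∧ zs i ≠ f i ∧ zs (i + 1) = (zs i - f i)⁻¹

/-- The `n`-th approximant `x_n = [f₀, …, f_n]_{ev}`. -/
def approx (f : ℕ → P.K) (n : ℕ) : P.K :=
  cfEval (List.ofFn fun i : Fin (n + 1) => f i)

/-- The continued fraction of `z` begins with the coefficients `f 0, …, f n`. -/
def CFBegins (f : ℕ → P.K) (n : ℕ) (z : P.K) : Prop :=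
  ∃ zs : ℕ → P.K, zs 0 = z ∧ (∀ i < n, P.CFStep f zs i) ∧
    f n ∈ P.Abar ∧ (zs n = f n ∨ 0 < P.ν (zs n - f n))

/-- `z` is the value of the continued fraction expression with coefficients `f`
and length `L` (finite or infinite); the coefficients are Puiseux polynomials of
positive degree after the zeroth one. -/
def CFExprEval (f : ℕ → P.K) (L : WithTop ℕ) (z : P.K) : Prop :=
  f 0 ∈ P.Abar ∧
  (∀ i : ℕ, 1 ≤ i → (i : WithTop ℕ) ≤ L → f i ∈ P.Abar ∧ 0 < P.deg (f i)) ∧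
  ((∃ N : ℕ, L = (N : WithTop ℕ) ∧ z = P.approx f N) ∨
    (L = ⊤ ∧ P.TendsTo (fun n => P.approx f n) z))

/-- The equivalence relation `(a, r) ~ (a', r')` iff `r = r'` and `ν (a - a') ≥ r`
(the pairs define the same Berkovich point `η_{a,r}` of type II or III). -/
def ballEquiv (p q : P.K × ℝ) : Prop :=
  p.2 = q.2 ∧ (p.1 = q.1 ∨ p.2 ≤ (P.ν (p.1 - q.1) : ℝ))

open scoped Classical in
/-- The Berkovich hyperbolic distance, computed on representatives. -/
noncomputable def berkDist (p q : P.K × ℝ) : ℝ :=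
  if p.1 = q.1 ∨ min p.2 q.2 ≤ (P.ν (p.1 - q.1) : ℝ) then |p.2 - q.2|
  else p.2 + q.2 - 2 * (P.ν (p.1 - q.1) : ℝ)

/-- The closed ball `B_a^{[r]} = {b : ν (b - a) ≥ r}` corresponding to `η_{a,r}`. -/
def closedBall (a : P.K) (r : ℝ) : Set P.K :=
  {b : P.K | b = a ∨ r ≤ (P.ν (b - a) : ℝ)}

/-- The Moebius transformation associated to a `2 × 2` matrix. -/
def mob (g : Matrix (Fin 2) (Fin 2) P.K) (x : P.K) : P.K :=
  (g 0 0 * x + g 0 1) / (g 1 0 * x + g 1 1)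

/-- The ring `A_M = E[t^{1/M}]`. -/
def AM (M : ℕ) : Subring P.K :=
  Subring.closure (Set.range P.emb ∪ {P.mono (1 / (M : ℚ))})

/-- The field `E(t^{1/M})`, whose `ν`-completion inside `K̂` is `K_M = E((t^{-1/M}))`. -/
def kM (M : ℕ) : Subfield P.K :=
  Subfield.closure (Set.range P.emb ∪ {P.mono (1 / (M : ℚ))})

end PuiseuxCompletion

theorem rho'_eq_prod {L : Type u} [Field L] (f : ℕ → L) (x : L) (n : ℕ) :
    rho' f n x = ∏ i ∈ Finset.range (n + 1), -rho f i x ^ 2 := by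
  induction n with
  | zero => simp [rho, rho']
  | succ n ih => rw [Finset.prod_range_succ, ← ih, rho', rho, mul_comm]

theorem rho_eq_of_recurrence {L : Type u} [Field L] {f zs : ℕ → L} {z : L} {n : ℕ}
    (h0 : zs 0 = z) (hrec : ∀ i ≤ n, zs (i + 1) = (zs i - f i)⁻¹) :
    ∀ k ≤ n, rho f k z = zs (k + 1)
  | 0, _ => by rw [rho, hrec 0 (Nat.zero_le n), h0]
  | k + 1, hk => by
    rw [rho, rho_eq_of_recurrence h0 hrec k (by omega), hrec (k + 1) hk]

namespace PuiseuxCompletion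

variable {E : Type u} [Field E] (P : PuiseuxCompletion E)

theorem ν_one : P.ν 1 = 0 := by
  rw [← P.mono_zero, P.ν_mono, neg_zero]

theorem ν_inv {x : P.K} (hx : x ≠ 0) : P.ν x⁻¹ = -P.ν x := by
  have h := P.ν_mul x x⁻¹ hx (inv_ne_zero hx)
  rw [mul_inv_cancel₀ hx, ν_one] at h
  linarith

theorem ν_div {x y : P.K} (hx : x ≠ 0) (hy : y ≠ 0) : P.ν (x / y) = P.ν x - P.ν y := by
  rw [div_eq_mul_inv, P.ν_mul _ _ hx (inv_ne_zero hy), P.ν_inv hy, sub_eq_add_neg]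

theorem ν_neg {x : P.K} (hx : x ≠ 0) : P.ν (-x) = P.ν x := by
  have hνm1 : P.ν (-1) = 0 := by
    have h := P.ν_mul (-1) (-1) (by norm_num) (by norm_num)
    rw [neg_mul_neg, one_mul, ν_one] at h
    linarith
  rw [← neg_one_mul, P.ν_mul _ _ (by norm_num) hx, hνm1, zero_add]

theorem ν_neg_sq {x : P.K} (hx : x ≠ 0) : P.ν (-x ^ 2) = 2 * P.ν x := by
  rw [P.ν_neg (pow_ne_zero 2 hx), sq, P.ν_mul x x hx hx, two_mul]

theorem ν_prod {ι : Type*} (s : Finset ι) {g : ι → P.K} (hg : ∀ i ∈ s, g i ≠ 0) :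
    P.ν (∏ i ∈ s, g i) = ∑ i ∈ s, P.ν (g i) := by
  classical
  induction s using Finset.induction_on with
  | empty => exact P.ν_one
  | insert a s ha ih =>
    rw [Finset.prod_insert ha, Finset.sum_insert ha,
      P.ν_mul _ _ (hg a (Finset.mem_insert_self a s))
        (Finset.prod_ne_zero_iff.mpr fun i hi => hg i (Finset.mem_insert_of_mem hi)),
      ih fun i hi => hg i (Finset.mem_insert_of_mem hi)]

theorem ν_prod_neg_sq {ι : Type*} (s : Finset ι) {g : ι → P.K} (hg : ∀ i ∈ s, g i ≠ 0) :
    P.ν (∏ i ∈ s, -g i ^ 2) = 2 * ∑ i ∈ s, P.ν (g i) := by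
  rw [P.ν_prod s fun i hi => neg_ne_zero.mpr (pow_ne_zero 2 (hg i hi)), Finset.mul_sum]
  exact Finset.sum_congr rfl fun i hi => P.ν_neg_sq (hg i hi)

theorem ν_eq_of_lt_ν_sub {a b : P.K} (ha : a ≠ 0) (hab : a ≠ b) (h : P.ν a < P.ν (a - b)) :
    P.ν b = P.ν a := by
  have hsub : a - b ≠ 0 := sub_ne_zero.mpr hab
  have hb : b ≠ 0 := by
    rintro rfl
    rw [sub_zero] at h
    exact lt_irrefl _ h
  have hle_a : min (P.ν b) (P.ν (a - b)) ≤ P.ν a := by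
    simpa using P.ν_add b (a - b) hb hsub (by simpa using ha)
  have hle_b : min (P.ν a) (P.ν (a - b)) ≤ P.ν b := by
    have := P.ν_add a (-(a - b)) ha (neg_ne_zero.mpr hsub)
      (by rwa [← sub_eq_add_neg, sub_sub_cancel])
    rwa [P.ν_neg hsub, ← sub_eq_add_neg, sub_sub_cancel] at this
  rw [min_eq_left h.le] at hle_b
  exact le_antisymm ((min_le_iff.mp hle_a).resolve_right h.not_ge) hle_b

theorem deg_eq_of_close {a b : P.K} (ha : a ≠ 0) (hneg : P.ν a < 0)
    (hab : a = b ∨ 0 < P.ν (a - b)) : P.deg b = -P.ν a := by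
  rw [deg, neg_inj]
  by_cases heq : a = b
  · rw [heq]
  · exact P.ν_eq_of_lt_ν_sub ha heq (hneg.trans (hab.resolve_left heq))

namespace CFStep

variable {P} {f zs : ℕ → P.K} {i : ℕ}

theorem succ_ne_zero (h : P.CFStep f zs i) : zs (i + 1) ≠ 0 := by
  rw [h.2.2.2]
  exact inv_ne_zero (sub_ne_zero.mpr h.2.2.1)

theorem ν_succ_neg (h : P.CFStep f zs i) : P.ν (zs (i + 1)) < 0 := by
  rw [h.2.2.2, P.ν_inv (sub_ne_zero.mpr h.2.2.1), neg_neg_iff_pos]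
  exact h.2.1

theorem deg_succ (h : P.CFStep f zs i)
    (hclose : zs (i + 1) = f (i + 1) ∨ 0 < P.ν (zs (i + 1) - f (i + 1))) :
    P.deg (f (i + 1)) = -P.ν (zs (i + 1)) :=
  P.deg_eq_of_close h.succ_ne_zero h.ν_succ_neg hclose

end CFStep

end PuiseuxCompletion

open PuiseuxCompletion in
theorem statement3_general {E : Type u} [Field E] (P : PuiseuxCompletion E)
    (z : P.K) (f zs : ℕ → P.K) (n : ℕ)
    (h0 : zs 0 = z) (hstep : ∀ i ≤ n, P.CFStep f zs i)
    (hcn : zs (n + 1) = f (n + 1) ∨ 0 < P.ν (zs (n + 1) - f (n + 1))) :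
    P.ν (rho f n z / rho' f n z) =
      P.deg (f (n + 1)) + 2 * ∑ i ∈ Finset.Icc 1 n, P.deg (f i) := by
  have hrho : ∀ k ≤ n, rho f k z = zs (k + 1) :=
    rho_eq_of_recurrence h0 fun i hi => (hstep i hi).2.2.2
  have hzs : ∀ k ∈ Finset.range (n + 1), zs (k + 1) ≠ 0 := fun k hk =>
    (hstep k (Finset.mem_range_succ_iff.mp hk)).succ_ne_zero
  have hρ' : rho' f n z = ∏ k ∈ Finset.range (n + 1), -zs (k + 1) ^ 2 := by
    rw [rho'_eq_prod]
    exact Finset.prod_congr rfl fun k hk => by rw [hrho k (Finset.mem_range_succ_iff.mp hk)]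
  have hdeg : ∀ k ≤ n, P.deg (f (k + 1)) = -P.ν (zs (k + 1)) := fun k hk =>
    (hstep k hk).deg_succ <| by
      rcases hk.lt_or_eq with hlt | rfl
      · exact Or.inr (hstep (k + 1) hlt).2.1
      · exact hcn
  have hsum : ∑ i ∈ Finset.Icc 1 n, P.deg (f i) = -∑ k ∈ Finset.range n, P.ν (zs (k + 1)) := by
    rw [← Finset.Ico_add_one_right_eq_Icc, Finset.sum_Ico_eq_sum_range, Nat.add_sub_cancel,
      ← Finset.sum_neg_distrib]
    exact Finset.sum_congr rfl fun k hk => by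
      rw [add_comm 1 k, hdeg k (Finset.mem_range.mp hk).le]
  have hρ'_ne : ∏ k ∈ Finset.range (n + 1), -zs (k + 1) ^ 2 ≠ 0 :=
    Finset.prod_ne_zero_iff.mpr fun k hk => neg_ne_zero.mpr (pow_ne_zero 2 (hzs k hk))
  rw [hrho n le_rfl, hρ', P.ν_div (hzs n (Finset.self_mem_range_succ n)) hρ'_ne,
    P.ν_prod_neg_sq _ hzs, Finset.sum_range_succ, hdeg n le_rfl, hsum]
  ring

open PuiseuxCompletion in
/-- if `z_{n+1}` is defined then
`ν (ρ_n(z) / ρ_n'(z)) = deg f_{n+1} + 2 Σ_{i=1}^n deg f_i`. -/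
theorem statement3 {E : Type u} [Field E] (P : PuiseuxCompletion E)
    (z : P.K) (f zs : ℕ → P.K) (n : ℕ)
    (h0 : zs 0 = z) (hstep : ∀ i ≤ n, P.CFStep f zs i)
    (hfn : f (n + 1) ∈ P.Abar)
    (hcn : zs (n + 1) = f (n + 1) ∨ 0 < P.ν (zs (n + 1) - f (n + 1))) :
    P.ν (rho f n z / rho' f n z) =
      P.deg (f (n + 1)) + 2 * ∑ i ∈ Finset.Icc 1 n, P.deg (f i) :=
  statement3_general P z f zs n h0 hstep hcn
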